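/- arXiv:1809.05224 — 5 statements merged into one kernel-verified Lean document; each statement's English description precedes it below -/
import Mathlib

section
/- Let W=(Y,X) be a random vector with E[Y^2]<∞, γ0(x)=E[Y|X=x], and α0(X) square-integrable. Suppose m(w,γ) is linear in γ and satisfies E[m(W,γ)] = E[α0(X)γ(X)] for all square-integrable γ, and let θ0 = E[m(W,γ0)]. Then for any square-integrable functions γ and α, defining ψ(W,θ0,γ,α) = m(W,γ) − θ0 + α(X)(Y − γ(X)), one has E[ψ(W,θ0,γ,α)] = −E[(α(X)−α0(X))(γ(X)−γ0(X))]. -/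
open MeasureTheory

/-!
By the Riesz representation, `E[m(W,γ)] − θ₀ = E[α₀(X)(γ(X) − γ₀(X))]`; since `Y − γ₀(X)` is
orthogonal to every square-integrable function of `X`, `E[α(X)(Y − γ(X))] = −E[α(X)(γ(X) − γ₀(X))]`.
Adding the two gives `−E[(α(X) − α₀(X))(γ(X) − γ₀(X))]`.
-/

namespace MeasureTheory

variable {Ω : Type*} [MeasurableSpace Ω] {μ : Measure Ω} {f f' g g' : Ω → ℝ}

theorem integral_mul_sub_of_memLp (hf : MemLp f 2 μ) (hg : MemLp g 2 μ) (hg' : MemLp g' 2 μ) :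
    ∫ ω, f ω * (g ω - g' ω) ∂μ = ∫ ω, f ω * g ω ∂μ - ∫ ω, f ω * g' ω ∂μ := by
  simp only [mul_sub]
  exact integral_sub (hf.integrable_mul hg) (hf.integrable_mul hg')

theorem integral_sub_mul_of_memLp (hf : MemLp f 2 μ) (hf' : MemLp f' 2 μ) (hg : MemLp g 2 μ) :
    ∫ ω, (f ω - f' ω) * g ω ∂μ = ∫ ω, f ω * g ω ∂μ - ∫ ω, f' ω * g ω ∂μ := by
  simp only [sub_mul]
  exact integral_sub (hf.integrable_mul hg) (hf'.integrable_mul hg)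

theorem integral_mul_sub_eq_neg_of_orthogonal {a y z z₀ : Ω → ℝ} (ha : MemLp a 2 μ)
    (hy : MemLp y 2 μ) (hz : MemLp z 2 μ) (hz₀ : MemLp z₀ 2 μ)
    (horth : ∫ ω, a ω * (y ω - z₀ ω) ∂μ = 0) :
    ∫ ω, a ω * (y ω - z ω) ∂μ = -∫ ω, a ω * (z ω - z₀ ω) ∂μ := by
  have hsplit := integral_mul_sub_of_memLp ha (hy.sub hz₀) (hz.sub hz₀)
  simp only [Pi.sub_apply, sub_sub_sub_cancel_right] at hsplit
  rw [hsplit, horth, zero_sub]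

theorem integral_sub_const_add [IsProbabilityMeasure μ] (hf : Integrable f μ)
    (hg : Integrable g μ) (c : ℝ) :
    ∫ ω, (f ω - c + g ω) ∂μ = (∫ ω, f ω ∂μ - c) + ∫ ω, g ω ∂μ := by
  rw [integral_add (f := fun ω => f ω - c) (hf.sub (integrable_const c)) hg,
    integral_sub hf (integrable_const c),
    integral_const, probReal_univ, one_smul]

end MeasureTheory

theorem debiased_moment_identity_general
    {Ω 𝒳 : Type*} [MeasurableSpace Ω]
    (μ : Measure Ω) [IsProbabilityMeasure μ]
    (Y : Ω → ℝ) (X : Ω → 𝒳)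
    (m : Ω → (𝒳 → ℝ) → ℝ)
    (γ0 α0 γ α : 𝒳 → ℝ)
    (hY : MemLp Y 2 μ)
    (hγ0 : MemLp (fun ω => γ0 (X ω)) 2 μ)
    (hα0 : MemLp (fun ω => α0 (X ω)) 2 μ)
    (hγ : MemLp (fun ω => γ (X ω)) 2 μ)
    (hα : MemLp (fun ω => α (X ω)) 2 μ)
    -- γ0 is the conditional expectation of Y given X:
    (hce : ∀ a : 𝒳 → ℝ, MemLp (fun ω => a (X ω)) 2 μ →
      ∫ ω, a (X ω) * (Y ω - γ0 (X ω)) ∂μ = 0)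
    -- Riesz representation: E[m(W,g)] = E[α0(X) g(X)] for all square-integrable g:
    (hRiesz : ∀ g : 𝒳 → ℝ, MemLp (fun ω => g (X ω)) 2 μ →
      ∫ ω, m ω g ∂μ = ∫ ω, α0 (X ω) * g (X ω) ∂μ)
    (hmγ : Integrable (fun ω => m ω γ) μ)
    (θ0 : ℝ) (hθ0 : θ0 = ∫ ω, m ω γ0 ∂μ) :
    ∫ ω, (m ω γ - θ0 + α (X ω) * (Y ω - γ (X ω))) ∂μ =
      - ∫ ω, (α (X ω) - α0 (X ω)) * (γ (X ω) - γ0 (X ω)) ∂μ := by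
  have hplugin : ∫ ω, m ω γ ∂μ - θ0 = ∫ ω, α0 (X ω) * (γ (X ω) - γ0 (X ω)) ∂μ := by
    rw [hθ0, hRiesz γ hγ, hRiesz γ0 hγ0, integral_mul_sub_of_memLp hα0 hγ hγ0]
  have hresidual : ∫ ω, α (X ω) * (Y ω - γ (X ω)) ∂μ =
      -∫ ω, α (X ω) * (γ (X ω) - γ0 (X ω)) ∂μ :=
    integral_mul_sub_eq_neg_of_orthogonal hα hY hγ hγ0 (hce α hα)
  have hresidual_int : Integrable (fun ω => α (X ω) * (Y ω - γ (X ω))) μ :=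
    hα.integrable_mul (hY.sub hγ)
  have hγerror : MemLp (fun ω => γ (X ω) - γ0 (X ω)) 2 μ := hγ.sub hγ0
  rw [integral_sub_const_add hmγ hresidual_int, hplugin, hresidual,
    integral_sub_mul_of_memLp hα hα0 hγerror]
  ring

/-- Debiasing identity: the debiased moment function
`ψ(w,θ₀,γ,α) = m(w,γ) − θ₀ + α(x)(y − γ(x))` satisfies
`E[ψ(W,θ₀,γ,α)] = −E[(α(X)−α₀(X))(γ(X)−γ₀(X))]`. -/
theorem debiased_moment_identity
    {Ω 𝒳 : Type*} [MeasurableSpace Ω] [MeasurableSpace 𝒳]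
    (μ : Measure Ω) [IsProbabilityMeasure μ]
    (Y : Ω → ℝ) (X : Ω → 𝒳)
    (m : Ω → (𝒳 → ℝ) → ℝ)
    (γ0 α0 γ α : 𝒳 → ℝ)
    (hY : MemLp Y 2 μ)
    (hγ0 : MemLp (fun ω => γ0 (X ω)) 2 μ)
    (hα0 : MemLp (fun ω => α0 (X ω)) 2 μ)
    (hγ : MemLp (fun ω => γ (X ω)) 2 μ)
    (hα : MemLp (fun ω => α (X ω)) 2 μ)
    -- m(w,γ) is linear in γ:
    (hm_add : ∀ ω (g g' : 𝒳 → ℝ), m ω (g + g') = m ω g + m ω g')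
    (hm_smul : ∀ ω (c : ℝ) (g : 𝒳 → ℝ), m ω (c • g) = c * m ω g)
    -- γ0 is the conditional expectation of Y given X:
    (hce : ∀ a : 𝒳 → ℝ, MemLp (fun ω => a (X ω)) 2 μ →
      ∫ ω, a (X ω) * (Y ω - γ0 (X ω)) ∂μ = 0)
    -- Riesz representation: E[m(W,g)] = E[α0(X) g(X)] for all square-integrable g:
    (hRiesz : ∀ g : 𝒳 → ℝ, MemLp (fun ω => g (X ω)) 2 μ →
      ∫ ω, m ω g ∂μ = ∫ ω, α0 (X ω) * g (X ω) ∂μ)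
    (hmγ : Integrable (fun ω => m ω γ) μ)
    (hmγ0 : Integrable (fun ω => m ω γ0) μ)
    (θ0 : ℝ) (hθ0 : θ0 = ∫ ω, m ω γ0 ∂μ) :
    ∫ ω, (m ω γ - θ0 + α (X ω) * (Y ω - γ (X ω))) ∂μ =
      - ∫ ω, (α (X ω) - α0 (X ω)) * (γ (X ω) - γ0 (X ω)) ∂μ :=
  debiased_moment_identity_general μ Y X m γ0 α0 γ α hY hγ0 hα0 hγ hα hce hRiesz hmγ θ0 hθ0
end

section
/- (Lemma C2, Lasso part) Let α0 ∈ L²(X), b: X → ℝ^p with each component square-integrable, and suppose there exist C > 0 and ρₙ ∈ ℝ^p with |ρₙ|₁ ≤ C and ‖α0 − b'ρₙ‖² ≤ C εₙ, where ‖·‖ is the L²(X) norm and εₙ > 0. Let ρ_L minimize ρ ↦ ‖α0 − b'ρ‖² + 2εₙ|ρ|₁. Then ‖α0 − b'ρ_L‖² ≤ C εₙ and |ρ_L|₁ ≤ C (for a possibly different constant C). -/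
open MeasureTheory

/-! Comparing the Lasso objective at `ρ_L` with its value at `ρₙ` gives
`‖α₀ − b'ρ_L‖² + 2εₙ|ρ_L|₁ ≤ Cεₙ + 2εₙC = 2εₙ · (3C/2)`; since both terms on the left are
nonnegative, each is bounded by the right-hand side. -/

theorem le_and_le_of_add_mul_le {a c lam B : ℝ} (hlam : 0 < lam) (ha : 0 ≤ a) (hc : 0 ≤ c)
    (h : a + lam * c ≤ lam * B) : a ≤ lam * B ∧ c ≤ B := by
  refine ⟨by nlinarith, le_of_mul_le_mul_left ?_ hlam⟩
  linarith

theorem population_lasso_approximation_general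
    {𝒳 : Type*} [MeasurableSpace 𝒳] (μ : Measure 𝒳)
    {p : ℕ} (α0 : 𝒳 → ℝ) (b : 𝒳 → Fin p → ℝ)
    (C εn : ℝ) (hεn : 0 < εn)
    (ρn : Fin p → ℝ)
    (hρn1 : ∑ j, |ρn j| ≤ C)
    (hρn2 : ∫ x, (α0 x - ∑ j, b x j * ρn j) ^ 2 ∂μ ≤ C * εn)
    (ρL : Fin p → ℝ)
    (hρL : ∀ ρ : Fin p → ℝ,
      (∫ x, (α0 x - ∑ j, b x j * ρL j) ^ 2 ∂μ) + 2 * εn * (∑ j, |ρL j|)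
        ≤ (∫ x, (α0 x - ∑ j, b x j * ρ j) ^ 2 ∂μ) + 2 * εn * (∑ j, |ρ j|)) :
    (∫ x, (α0 x - ∑ j, b x j * ρL j) ^ 2 ∂μ) ≤ 3 * C * εn ∧
      (∑ j, |ρL j|) ≤ 3 * C := by
  have hC : 0 ≤ C := (Finset.sum_nonneg fun j _ => abs_nonneg (ρn j)).trans hρn1
  have hbasic : (∫ x, (α0 x - ∑ j, b x j * ρL j) ^ 2 ∂μ) + 2 * εn * (∑ j, |ρL j|)
      ≤ 2 * εn * (3 * C / 2) :=
    (hρL ρn).trans (by nlinarith)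
  obtain ⟨hrisk, hnorm⟩ := le_and_le_of_add_mul_le (by positivity)
    (integral_nonneg fun x => sq_nonneg _) (Finset.sum_nonneg fun j _ => abs_nonneg (ρL j)) hbasic
  exact ⟨hrisk.trans_eq (by ring), hnorm.trans (by linarith)⟩

/-- Lemma C2, Lasso part: the population Lasso coefficient `ρ_L` satisfies
`‖α₀ − b'ρ_L‖² ≤ C' εₙ` and `|ρ_L|₁ ≤ C'` for a constant `C' = 3C`. -/
theorem population_lasso_approximation
    {𝒳 : Type*} [MeasurableSpace 𝒳] (μ : Measure 𝒳) [IsProbabilityMeasure μ]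
    {p : ℕ} (α0 : 𝒳 → ℝ) (b : 𝒳 → Fin p → ℝ)
    (hα0 : MemLp α0 2 μ) (hb : ∀ j, MemLp (fun x => b x j) 2 μ)
    (C εn : ℝ) (hC : 0 < C) (hεn : 0 < εn)
    (ρn : Fin p → ℝ)
    (hρn1 : ∑ j, |ρn j| ≤ C)
    (hρn2 : ∫ x, (α0 x - ∑ j, b x j * ρn j) ^ 2 ∂μ ≤ C * εn)
    (ρL : Fin p → ℝ)
    (hρL : ∀ ρ : Fin p → ℝ,
      (∫ x, (α0 x - ∑ j, b x j * ρL j) ^ 2 ∂μ) + 2 * εn * (∑ j, |ρL j|)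
        ≤ (∫ x, (α0 x - ∑ j, b x j * ρ j) ^ 2 ∂μ) + 2 * εn * (∑ j, |ρ j|)) :
    (∫ x, (α0 x - ∑ j, b x j * ρL j) ^ 2 ∂μ) ≤ 3 * C * εn ∧
      (∑ j, |ρL j|) ≤ 3 * C :=
  population_lasso_approximation_general μ α0 b C εn hεn ρn hρn1 hρn2 ρL hρL
end

section
/- (Lemma C2, Dantzig part) With the assumptions of the Lasso part, let M = E[α0(X)b(X)] and G = E[b(X)b(X)'], and let ρ_D minimize |ρ|₁ subject to |M − Gρ|_∞ ≤ εₙ. Then ρ_L is feasible for this problem, |ρ_D|₁ ≤ |ρ_L|₁, ‖b'(ρ_L − ρ_D)‖² ≤ |ρ_L − ρ_D|₁ · |G(ρ_D − ρ_L)|_∞ ≤ C εₙ, and hence ‖α0 − b'ρ_D‖² ≤ C εₙ for some constant C. -/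
/-!
Expanding the population loss `Q ρ = ∫ (α₀ - b'ρ)²` around `ρ` gives
`Q (ρ + δ) = Q ρ - 2 δ ⬝ (M - G ρ) + δ ⬝ G δ`. Perturbing the Lasso solution `ρL` in a single
coordinate then shows `|M - G ρL|_∞ ≤ εₙ`, so `ρL` is Dantzig-feasible, and comparing it with
`ρn` gives `|ρL|₁ ≤ 3C/2` and `Q ρL ≤ 3Cεₙ`. Since `ρL` and `ρD` are both feasible,
`|G (ρD - ρL)|_∞ ≤ 2εₙ`, and the `ℓ¹`–`ℓ^∞` Hölder inequality bounds `δ ⬝ G δ` for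
`δ = ρL - ρD`; the expansion at `ρL` then bounds `Q ρD`.
-/

open MeasureTheory Matrix Filter Topology

theorem abs_le_of_forall_two_mul_le {D a ε : ℝ}
    (h : ∀ t, 2 * t * D ≤ t ^ 2 * a + 2 * ε * |t|) : |D| ≤ ε := by
  have hsmall : ∀ s > 0, |D| ≤ ε + s * a / 2 := by
    intro s hs
    have hpos := h s
    have hneg := h (-s)
    rw [abs_of_pos hs] at hpos
    rw [abs_neg, abs_of_pos hs] at hneg
    refine abs_le.2 ⟨?_, ?_⟩ <;> nlinarith
  have hlim : Tendsto (fun s => ε + s * a / 2) (𝓝[>] 0) (𝓝 ε) := by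
    refine tendsto_nhdsWithin_of_tendsto_nhds ?_
    simpa using (by fun_prop : Continuous fun s : ℝ => ε + s * a / 2).tendsto 0
  exact ge_of_tendsto hlim (eventually_nhdsWithin_of_forall hsmall)

theorem penalized_le_oracle_bounds {q qn l ln C ε : ℝ} (hε : 0 < ε) (hq : 0 ≤ q) (hl : 0 ≤ l)
    (hmin : q + 2 * ε * l ≤ qn + 2 * ε * ln) (hqn : qn ≤ C * ε) (hln : ln ≤ C) :
    l ≤ 3 * C / 2 ∧ q ≤ 3 * C * ε := by
  constructor <;> nlinarith

section FiniteDimensional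

variable {ι : Type*} [Fintype ι]

theorem abs_dotProduct_le {u v : ι → ℝ} {c : ℝ} (hv : ∀ j, |v j| ≤ c) :
    |u ⬝ᵥ v| ≤ (∑ j, |u j|) * c :=
  calc |u ⬝ᵥ v| ≤ ∑ j, |u j * v j| := Finset.abs_sum_le_sum_abs _ _
    _ ≤ ∑ j, |u j| * c := Finset.sum_le_sum fun j _ => by
      rw [abs_mul]; exact mul_le_mul_of_nonneg_left (hv j) (abs_nonneg _)
    _ = (∑ j, |u j|) * c := (Finset.sum_mul ..).symm

theorem sum_abs_sub_le (ρ ρ' : ι → ℝ) : ∑ j, |ρ j - ρ' j| ≤ ∑ j, |ρ j| + ∑ j, |ρ' j| :=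
  (Finset.sum_le_sum fun j _ => abs_sub (ρ j) (ρ' j)).trans_eq Finset.sum_add_distrib

theorem dotProduct_mulVec_sub_le (G : Matrix ι ι ℝ) (ρ ρ' : ι → ℝ) :
    (ρ - ρ') ⬝ᵥ (G *ᵥ (ρ - ρ')) ≤ (∑ j, |ρ j - ρ' j|) * ⨆ j, |(G *ᵥ (ρ' - ρ)) j| := by
  refine (le_abs_self _).trans (abs_dotProduct_le fun j => ?_)
  rw [← neg_sub, mulVec_neg, Pi.neg_apply, abs_neg]
  exact le_ciSup (f := fun k => |(G *ᵥ (ρ' - ρ)) k|) (Set.finite_range _).bddAbove j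

theorem iSup_abs_mulVec_sub_le {G : Matrix ι ι ℝ} {M ρ ρ' : ι → ℝ} {ε : ℝ}
    (hρ : ∀ j, |M j - (G *ᵥ ρ) j| ≤ ε) (hρ' : ∀ j, |M j - (G *ᵥ ρ') j| ≤ ε) (hε : 0 ≤ ε) :
    ⨆ j, |(G *ᵥ (ρ - ρ')) j| ≤ 2 * ε := by
  refine Real.iSup_le (fun j => ?_) (by positivity)
  have h := abs_sub (M j - (G *ᵥ ρ') j) (M j - (G *ᵥ ρ) j)
  rw [sub_sub_sub_cancel_left, ← Pi.sub_apply, ← mulVec_sub] at h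
  linarith [hρ j, hρ' j]

section Expansion

variable {Q : (ι → ℝ) → ℝ} {G : Matrix ι ι ℝ} {r ρ : ι → ℝ} {ε : ℝ}

theorem abs_le_of_penalized_min (hQ : ∀ δ, Q (ρ + δ) = Q ρ - 2 * (δ ⬝ᵥ r) + δ ⬝ᵥ (G *ᵥ δ))
    (hmin : ∀ ρ', Q ρ + 2 * ε * ∑ j, |ρ j| ≤ Q ρ' + 2 * ε * ∑ j, |ρ' j|) (hε : 0 ≤ ε)
    (j : ι) : |r j| ≤ ε := by
  classical
  refine abs_le_of_forall_two_mul_le (a := G j j) fun t => ?_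
  set e : ι → ℝ := Pi.single j t
  have hl1 : ∑ k, |(ρ + e) k| ≤ ∑ k, |ρ k| + |t| :=
    calc ∑ k, |(ρ + e) k| ≤ ∑ k, (|ρ k| + |e k|) :=
          Finset.sum_le_sum fun k _ => abs_add_le _ _
      _ = ∑ k, |ρ k| + |t| := by
        rw [Finset.sum_add_distrib]; simp [e, Pi.single_apply, apply_ite]
  have h := hmin (ρ + e)
  simp only [hQ, e, single_dotProduct, mulVec, dotProduct_single] at h
  nlinarith [mul_le_mul_of_nonneg_left hl1 (by positivity : 0 ≤ 2 * ε)]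

theorem apply_le_of_quadratic_expansion
    (hQ : ∀ δ, Q (ρ + δ) = Q ρ - 2 * (δ ⬝ᵥ r) + δ ⬝ᵥ (G *ᵥ δ)) (hr : ∀ j, |r j| ≤ ε)
    (ρ' : ι → ℝ) :
    Q ρ' ≤ Q ρ + 2 * ((∑ j, |ρ j - ρ' j|) * ε) + (ρ - ρ') ⬝ᵥ (G *ᵥ (ρ - ρ')) := by
  have h := hQ (ρ' - ρ)
  rw [add_sub_cancel, ← neg_sub ρ ρ', neg_dotProduct, mulVec_neg, neg_dotProduct_neg] at h
  have hcross : |(ρ - ρ') ⬝ᵥ r| ≤ (∑ j, |ρ j - ρ' j|) * ε := abs_dotProduct_le hr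
  linarith [abs_le.1 hcross]

end Expansion

end FiniteDimensional

section Moments

variable {X ι : Type*} [MeasurableSpace X] {μ : Measure X} {b : X → ι → ℝ}

noncomputable def momentMatrix (μ : Measure X) (b : X → ι → ℝ) : Matrix ι ι ℝ :=
  Matrix.of fun j k => ∫ x, b x j * b x k ∂μ

noncomputable def crossMoment (μ : Measure X) (f : X → ℝ) (b : X → ι → ℝ) : ι → ℝ :=
  fun j => ∫ x, f x * b x j ∂μ

theorem crossMoment_sub {f g : X → ℝ} (hf : MemLp f 2 μ) (hg : MemLp g 2 μ)
    (hb : ∀ j, MemLp (fun x => b x j) 2 μ) :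
    crossMoment μ (fun x => f x - g x) b = crossMoment μ f b - crossMoment μ g b := by
  ext j
  simp_rw [crossMoment, sub_mul]
  exact integral_sub (hf.integrable_mul (hb j)) (hg.integrable_mul (hb j))

variable [Fintype ι]

theorem memLp_sum_mul (hb : ∀ j, MemLp (fun x => b x j) 2 μ) (δ : ι → ℝ) :
    MemLp (fun x => ∑ j, b x j * δ j) 2 μ :=
  memLp_finsetSum _ fun j _ => (hb j).mul_const (δ j)

theorem integral_mul_sum_mul {f : X → ℝ} (hf : MemLp f 2 μ)
    (hb : ∀ j, MemLp (fun x => b x j) 2 μ) (δ : ι → ℝ) :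
    ∫ x, f x * ∑ j, b x j * δ j ∂μ = crossMoment μ f b ⬝ᵥ δ := by
  have hint : ∀ j, Integrable (fun x => f x * b x j * δ j) μ :=
    fun j => (hf.integrable_mul (hb j)).mul_const (δ j)
  simp_rw [Finset.mul_sum, ← mul_assoc]
  rw [integral_finsetSum _ fun j _ => hint j]
  simp_rw [integral_mul_const]
  rfl

theorem crossMoment_sum_mul (hb : ∀ j, MemLp (fun x => b x j) 2 μ) (ρ : ι → ℝ) :
    crossMoment μ (fun x => ∑ k, b x k * ρ k) b = momentMatrix μ b *ᵥ ρ := by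
  ext j
  simp_rw [crossMoment, mul_comm _ (b _ j)]
  exact integral_mul_sum_mul (hb j) hb ρ

theorem integral_sq_sum_mul (hb : ∀ j, MemLp (fun x => b x j) 2 μ) (δ : ι → ℝ) :
    ∫ x, (∑ j, b x j * δ j) ^ 2 ∂μ = δ ⬝ᵥ (momentMatrix μ b *ᵥ δ) := by
  simp_rw [sq]
  rw [integral_mul_sum_mul (memLp_sum_mul hb δ) hb, crossMoment_sum_mul hb, dotProduct_comm]

theorem integral_sq_sub_sum_mul_add {f : X → ℝ} (hf : MemLp f 2 μ)
    (hb : ∀ j, MemLp (fun x => b x j) 2 μ) (ρ δ : ι → ℝ) :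
    ∫ x, (f x - ∑ j, b x j * (ρ + δ) j) ^ 2 ∂μ
      = ∫ x, (f x - ∑ j, b x j * ρ j) ^ 2 ∂μ
        - 2 * (δ ⬝ᵥ (crossMoment μ f b - momentMatrix μ b *ᵥ ρ))
        + δ ⬝ᵥ (momentMatrix μ b *ᵥ δ) := by
  have hr : MemLp (fun x => f x - ∑ j, b x j * ρ j) 2 μ := hf.sub (memLp_sum_mul hb ρ)
  have hδ := memLp_sum_mul hb δ
  have hexpand : ∀ x, (f x - ∑ j, b x j * (ρ + δ) j) ^ 2
      = (f x - ∑ j, b x j * ρ j) ^ 2 - 2 * ((f x - ∑ j, b x j * ρ j) * ∑ j, b x j * δ j)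
        + (∑ j, b x j * δ j) ^ 2 := by
    intro x
    simp only [Pi.add_apply, mul_add, Finset.sum_add_distrib]
    ring
  have hcross : Integrable (fun x => 2 * ((f x - ∑ j, b x j * ρ j) * ∑ j, b x j * δ j)) μ :=
    (hr.integrable_mul hδ).const_mul 2
  have hdiff : Integrable (fun x => (f x - ∑ j, b x j * ρ j) ^ 2
      - 2 * ((f x - ∑ j, b x j * ρ j) * ∑ j, b x j * δ j)) μ := hr.integrable_sq.sub hcross
  simp_rw [hexpand]
  rw [integral_add hdiff hδ.integrable_sq, integral_sub hr.integrable_sq hcross,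
    integral_const_mul, integral_mul_sum_mul hr hb, integral_sq_sum_mul hb,
    crossMoment_sub hf (memLp_sum_mul hb ρ) hb, crossMoment_sum_mul hb, dotProduct_comm]

end Moments

theorem population_dantzig_approximation_general
    {𝒳 : Type*} [MeasurableSpace 𝒳] (μ : Measure 𝒳)
    {p : ℕ} (α0 : 𝒳 → ℝ) (b : 𝒳 → Fin p → ℝ)
    (hα0 : MemLp α0 2 μ) (hb : ∀ j, MemLp (fun x => b x j) 2 μ)
    (C εn : ℝ) (hεn : 0 < εn)
    (ρn : Fin p → ℝ)
    (hρn1 : ∑ j, |ρn j| ≤ C)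
    (hρn2 : ∫ x, (α0 x - ∑ j, b x j * ρn j) ^ 2 ∂μ ≤ C * εn)
    (ρL : Fin p → ℝ)
    (hρL : ∀ ρ : Fin p → ℝ,
      (∫ x, (α0 x - ∑ j, b x j * ρL j) ^ 2 ∂μ) + 2 * εn * (∑ j, |ρL j|)
        ≤ (∫ x, (α0 x - ∑ j, b x j * ρ j) ^ 2 ∂μ) + 2 * εn * (∑ j, |ρ j|))
    (M : Fin p → ℝ) (hM : ∀ j, M j = ∫ x, α0 x * b x j ∂μ)
    (G : Matrix (Fin p) (Fin p) ℝ) (hG : ∀ j k, G j k = ∫ x, b x j * b x k ∂μ)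
    (ρD : Fin p → ℝ)
    (hρD_feas : ∀ j, |M j - (G *ᵥ ρD) j| ≤ εn)
    (hρD_min : ∀ ρ : Fin p → ℝ, (∀ j, |M j - (G *ᵥ ρ) j| ≤ εn) →
      ∑ j, |ρD j| ≤ ∑ j, |ρ j|) :
    (∀ j, |M j - (G *ᵥ ρL) j| ≤ εn) ∧
    (∑ j, |ρD j| ≤ ∑ j, |ρL j|) ∧
    (∫ x, (∑ j, b x j * (ρL j - ρD j)) ^ 2 ∂μ
        ≤ (∑ j, |ρL j - ρD j|) * (⨆ j, |(G *ᵥ (ρD - ρL)) j|)) ∧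
    ((∑ j, |ρL j - ρD j|) * (⨆ j, |(G *ᵥ (ρD - ρL)) j|) ≤ 6 * C * εn) ∧
    (∫ x, (α0 x - ∑ j, b x j * ρD j) ^ 2 ∂μ ≤ 18 * C * εn) := by
  obtain rfl : M = crossMoment μ α0 b := funext hM
  obtain rfl : G = momentMatrix μ b := Matrix.ext hG
  have hexp := integral_sq_sub_sum_mul_add hα0 hb ρL
  have hL_feas := abs_le_of_penalized_min
    (Q := fun ρ => ∫ x, (α0 x - ∑ j, b x j * ρ j) ^ 2 ∂μ) hexp hρL hεn.le
  have hl1_nonneg : ∀ ρ : Fin p → ℝ, 0 ≤ ∑ j, |ρ j| :=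
    fun ρ => Finset.sum_nonneg fun j _ => abs_nonneg (ρ j)
  obtain ⟨hL_l1, hL_loss⟩ := penalized_le_oracle_bounds hεn
    (integral_nonneg fun x => sq_nonneg _) (hl1_nonneg ρL) (hρL ρn) hρn2 hρn1
  have hC : 0 ≤ C := (hl1_nonneg ρn).trans hρn1
  have hD_l1 := hρD_min ρL hL_feas
  have hδ_l1 : ∑ j, |ρL j - ρD j| ≤ 3 * C := (sum_abs_sub_le ρL ρD).trans (by linarith)
  have hS := iSup_abs_mulVec_sub_le hρD_feas hL_feas hεn.le
  have hform := dotProduct_mulVec_sub_le (momentMatrix μ b) ρL ρD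
  have hquad : (∑ j, |ρL j - ρD j|) * ⨆ j, |(momentMatrix μ b *ᵥ (ρD - ρL)) j| ≤ 6 * C * εn :=
    (mul_le_mul hδ_l1 hS (Real.iSup_nonneg fun _ => abs_nonneg _)
      (by linarith)).trans_eq (by ring)
  refine ⟨hL_feas, hD_l1, (integral_sq_sum_mul hb (ρL - ρD)).trans_le hform, hquad, ?_⟩
  have hD_loss := apply_le_of_quadratic_expansion
    (Q := fun ρ => ∫ x, (α0 x - ∑ j, b x j * ρ j) ^ 2 ∂μ) hexp hL_feas ρD
  linarith [mul_le_mul_of_nonneg_right hδ_l1 hεn.le, mul_nonneg hC hεn.le]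

/-- Lemma C2, Dantzig part: with `M = E[α₀(X)b(X)]` and `G = E[b(X)b(X)']`,
the population Dantzig coefficient `ρ_D` satisfies: `ρ_L` is feasible,
`|ρ_D|₁ ≤ |ρ_L|₁`, `‖b'(ρ_L−ρ_D)‖² ≤ |ρ_L−ρ_D|₁·|G(ρ_D−ρ_L)|_∞ ≤ C'εₙ`,
and hence `‖α₀ − b'ρ_D‖² ≤ C''εₙ`. -/
theorem population_dantzig_approximation
    {𝒳 : Type*} [MeasurableSpace 𝒳] (μ : Measure 𝒳) [IsProbabilityMeasure μ]
    {p : ℕ} (α0 : 𝒳 → ℝ) (b : 𝒳 → Fin p → ℝ)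
    (hα0 : MemLp α0 2 μ) (hb : ∀ j, MemLp (fun x => b x j) 2 μ)
    (C εn : ℝ) (hC : 0 < C) (hεn : 0 < εn)
    (ρn : Fin p → ℝ)
    (hρn1 : ∑ j, |ρn j| ≤ C)
    (hρn2 : ∫ x, (α0 x - ∑ j, b x j * ρn j) ^ 2 ∂μ ≤ C * εn)
    (ρL : Fin p → ℝ)
    (hρL : ∀ ρ : Fin p → ℝ,
      (∫ x, (α0 x - ∑ j, b x j * ρL j) ^ 2 ∂μ) + 2 * εn * (∑ j, |ρL j|)
        ≤ (∫ x, (α0 x - ∑ j, b x j * ρ j) ^ 2 ∂μ) + 2 * εn * (∑ j, |ρ j|))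
    (M : Fin p → ℝ) (hM : ∀ j, M j = ∫ x, α0 x * b x j ∂μ)
    (G : Matrix (Fin p) (Fin p) ℝ) (hG : ∀ j k, G j k = ∫ x, b x j * b x k ∂μ)
    (ρD : Fin p → ℝ)
    (hρD_feas : ∀ j, |M j - (G *ᵥ ρD) j| ≤ εn)
    (hρD_min : ∀ ρ : Fin p → ℝ, (∀ j, |M j - (G *ᵥ ρ) j| ≤ εn) →
      ∑ j, |ρD j| ≤ ∑ j, |ρ j|) :
    (∀ j, |M j - (G *ᵥ ρL) j| ≤ εn) ∧
    (∑ j, |ρD j| ≤ ∑ j, |ρL j|) ∧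
    (∫ x, (∑ j, b x j * (ρL j - ρD j)) ^ 2 ∂μ
        ≤ (∑ j, |ρL j - ρD j|) * (⨆ j, |(G *ᵥ (ρD - ρL)) j|)) ∧
    ((∑ j, |ρL j - ρD j|) * (⨆ j, |(G *ᵥ (ρD - ρL)) j|) ≤ 6 * C * εn) ∧
    (∫ x, (α0 x - ∑ j, b x j * ρD j) ^ 2 ∂μ ≤ 18 * C * εn) :=
  population_dantzig_approximation_general μ α0 b hα0 hb C εn hεn ρn hρn1 hρn2 ρL hρL M hM G hG ρD
    hρD_feas hρD_min
end

section
/- (Key inequality in Lemma C4) Let ‖·‖ be the L² norm, α0 ∈ L²(X), b: X → ℝ^p, εₙ > 0, ρ̄ ∈ ℝ^p arbitrary with support J_ρ̄, and let ρ_L minimize ρ ↦ ‖α0 − b'ρ‖² + 2εₙ|ρ|₁. Then, writing α_L = b'ρ_L, ᾱ = b'ρ̄ and δ = ρ_L − ρ̄: ‖α0 − α_L‖² + εₙ Σ_{j ∈ J_ρ̄^c}|δⱼ| ≤ ‖α0 − ᾱ‖² + 3 εₙ Σ_{j ∈ J_ρ̄}|δⱼ|. -/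
open MeasureTheory Finset

/-- Coordinatewise, `|ρ j| = |ρ̄ j| + |δ j|` off the support of `ρ̄` and
`|ρ j| ≥ |ρ̄ j| - |δ j|` on it. -/
theorem sum_abs_add_sum_abs_sub_off_support_le {ι : Type*} [Fintype ι] (ρ ρbar : ι → ℝ) :
    ∑ j, |ρbar j| + ∑ j ∈ univ.filter (fun j => ρbar j = 0), |ρ j - ρbar j|
      ≤ ∑ j, |ρ j| + ∑ j ∈ univ.filter (fun j => ρbar j ≠ 0), |ρ j - ρbar j| := by
  have hcoord : ∀ j, |ρbar j| + (if ρbar j = 0 then |ρ j - ρbar j| else 0)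
      ≤ |ρ j| + (if ρbar j = 0 then 0 else |ρ j - ρbar j|) := by
    intro j
    split_ifs with h
    · simp [h]
    · linarith [abs_sub_abs_le_abs_sub (ρbar j) (ρ j), abs_sub_comm (ρbar j) (ρ j)]
  have := sum_le_sum fun j (_ : j ∈ univ) => hcoord j
  simpa only [sum_add_distrib, sum_ite, sum_const_zero, add_zero, zero_add] using this

theorem lasso_cone_inequality {ι : Type*} [Fintype ι] (f : (ι → ℝ) → ℝ) {ε : ℝ} (hε : 0 ≤ ε)
    (ρbar ρL : ι → ℝ)
    (hρL : ∀ ρ, f ρL + 2 * ε * ∑ j, |ρL j| ≤ f ρ + 2 * ε * ∑ j, |ρ j|) :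
    f ρL + ε * ∑ j ∈ univ.filter (fun j => ρbar j = 0), |ρL j - ρbar j|
      ≤ f ρbar + 3 * ε * ∑ j ∈ univ.filter (fun j => ρbar j ≠ 0), |ρL j - ρbar j| := by
  have hopt := hρL ρbar
  have hl1 := mul_le_mul_of_nonneg_left (sum_abs_add_sum_abs_sub_off_support_le ρL ρbar)
    (by positivity : 0 ≤ 2 * ε)
  have hoff : 0 ≤ ε * ∑ j ∈ univ.filter (fun j => ρbar j = 0), |ρL j - ρbar j| :=
    mul_nonneg hε (sum_nonneg fun _ _ => abs_nonneg _)
  have hon : 0 ≤ ε * ∑ j ∈ univ.filter (fun j => ρbar j ≠ 0), |ρL j - ρbar j| :=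
    mul_nonneg hε (sum_nonneg fun _ _ => abs_nonneg _)
  linarith

theorem lasso_key_inequality_general
    {𝒳 : Type*} [MeasurableSpace 𝒳] (μ : Measure 𝒳)
    {p : ℕ} (α0 : 𝒳 → ℝ) (b : 𝒳 → Fin p → ℝ)
    (εn : ℝ) (hεn : 0 < εn)
    (ρbar ρL : Fin p → ℝ)
    (hρL : ∀ ρ : Fin p → ℝ,
      (∫ x, (α0 x - ∑ j, b x j * ρL j) ^ 2 ∂μ) + 2 * εn * (∑ j, |ρL j|)
        ≤ (∫ x, (α0 x - ∑ j, b x j * ρ j) ^ 2 ∂μ) + 2 * εn * (∑ j, |ρ j|)) :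
    (∫ x, (α0 x - ∑ j, b x j * ρL j) ^ 2 ∂μ)
        + εn * ∑ j ∈ Finset.univ.filter (fun j => ρbar j = 0), |ρL j - ρbar j|
      ≤ (∫ x, (α0 x - ∑ j, b x j * ρbar j) ^ 2 ∂μ)
        + 3 * εn * ∑ j ∈ Finset.univ.filter (fun j => ρbar j ≠ 0), |ρL j - ρbar j| :=
  lasso_cone_inequality (fun ρ => ∫ x, (α0 x - ∑ j, b x j * ρ j) ^ 2 ∂μ) hεn.le ρbar ρL hρL

/-- Key inequality in Lemma C4: for the population Lasso minimizer `ρ_L` and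
any `ρ̄`, with `δ = ρ_L − ρ̄`,
`‖α₀−α_L‖² + εₙ Σ_{j∉J_ρ̄}|δⱼ| ≤ ‖α₀−ᾱ‖² + 3εₙ Σ_{j∈J_ρ̄}|δⱼ|`. -/
theorem lasso_key_inequality
    {𝒳 : Type*} [MeasurableSpace 𝒳] (μ : Measure 𝒳) [IsProbabilityMeasure μ]
    {p : ℕ} (α0 : 𝒳 → ℝ) (b : 𝒳 → Fin p → ℝ)
    (εn : ℝ) (hεn : 0 < εn)
    (ρbar ρL : Fin p → ℝ)
    (hρL : ∀ ρ : Fin p → ℝ,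
      (∫ x, (α0 x - ∑ j, b x j * ρL j) ^ 2 ∂μ) + 2 * εn * (∑ j, |ρL j|)
        ≤ (∫ x, (α0 x - ∑ j, b x j * ρ j) ^ 2 ∂μ) + 2 * εn * (∑ j, |ρ j|)) :
    (∫ x, (α0 x - ∑ j, b x j * ρL j) ^ 2 ∂μ)
        + εn * ∑ j ∈ Finset.univ.filter (fun j => ρbar j = 0), |ρL j - ρbar j|
      ≤ (∫ x, (α0 x - ∑ j, b x j * ρbar j) ^ 2 ∂μ)
        + 3 * εn * ∑ j ∈ Finset.univ.filter (fun j => ρbar j ≠ 0), |ρL j - ρbar j| :=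
  lasso_key_inequality_general μ α0 b εn hεn ρbar ρL hρL
end

section
/- (ℓ¹ bound for the Lasso estimator, core step of Lemma C3) Let M̂ ∈ ℝ^p, Ĝ a p×p positive semi-definite matrix, ρ_L ∈ ℝ^p, r > 0, and suppose |M̂ − Ĝρ_L|_∞ ≤ r/4. Let ρ̂ minimize ρ ↦ −2M̂'ρ + ρ'Ĝρ + 2r|ρ|₁. Then |ρ̂|₁ ≤ 3|ρ_L|₁. -/
/-!
Comparing the Lasso objective at its minimizer `ρ̂` with its value at `ρ_L`, and expanding the
quadratic term around `ρ_L`, gives the basic inequality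
`r |ρ̂|₁ ≤ (M̂ − Ĝρ_L)'(ρ̂ − ρ_L) − ½ (ρ̂ − ρ_L)'Ĝ(ρ̂ − ρ_L) + r |ρ_L|₁`.
The quadratic term is nonpositive, and Hölder's inequality bounds the linear one by
`(r/4) |ρ̂ − ρ_L|₁ ≤ (r/4)(|ρ̂|₁ + |ρ_L|₁)`, whence `3 |ρ̂|₁ ≤ 5 |ρ_L|₁`.
-/

open Matrix

theorem Matrix.IsSymm.dotProduct_mulVec_sub_dotProduct_mulVec {R n : Type*} [CommRing R]
    [Fintype n] {A : Matrix n n R} (hA : A.IsSymm) (x y : n → R) :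
    x ⬝ᵥ (A *ᵥ x) - y ⬝ᵥ (A *ᵥ y) =
      (x - y) ⬝ᵥ (A *ᵥ (x - y)) + 2 * ((A *ᵥ y) ⬝ᵥ (x - y)) := by
  have hswap : y ⬝ᵥ (A *ᵥ x) = x ⬝ᵥ (A *ᵥ y) := by
    rw [dotProduct_mulVec, ← mulVec_transpose, hA.eq, dotProduct_comm]
  rw [mulVec_sub, dotProduct_sub, sub_dotProduct, sub_dotProduct, dotProduct_sub, hswap,
    dotProduct_comm (A *ᵥ y) x, dotProduct_comm (A *ᵥ y) y]
  ring

theorem dotProduct_le_mul_sum_abs {R n : Type*} [Ring R] [LinearOrder R] [IsStrictOrderedRing R]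
    [Fintype n] {u v : n → R} {c : R} (hu : ∀ j, |u j| ≤ c) :
    u ⬝ᵥ v ≤ c * ∑ j, |v j| := by
  rw [Finset.mul_sum]
  refine Finset.sum_le_sum fun j _ => ?_
  calc u j * v j ≤ |u j| * |v j| := by rw [← abs_mul]; exact le_abs_self _
    _ ≤ c * |v j| := mul_le_mul_of_nonneg_right (hu j) (abs_nonneg _)

theorem sum_abs_sub_le_s15 {R n : Type*} [AddCommGroup R] [LinearOrder R] [IsOrderedAddMonoid R]
    [Fintype n] (x y : n → R) :
    ∑ j, |x j - y j| ≤ ∑ j, |x j| + ∑ j, |y j| := by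
  rw [← Finset.sum_add_distrib]
  exact Finset.sum_le_sum fun j _ => abs_sub _ _

section Lasso

variable {n : Type*} [Fintype n]

def lassoObjective (M : n → ℝ) (G : Matrix n n ℝ) (r : ℝ) (ρ : n → ℝ) : ℝ :=
  -2 * (∑ j, M j * ρ j) + ρ ⬝ᵥ (G *ᵥ ρ) + 2 * r * ∑ j, |ρ j|

theorem lassoObjective_sub_lassoObjective {G : Matrix n n ℝ} (hG : G.IsSymm)
    (M : n → ℝ) (r : ℝ) (x y : n → ℝ) :
    lassoObjective M G r x - lassoObjective M G r y =
      -2 * ((M - G *ᵥ y) ⬝ᵥ (x - y)) + (x - y) ⬝ᵥ (G *ᵥ (x - y))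
        + 2 * r * (∑ j, |x j| - ∑ j, |y j|) := by
  have hquad := hG.dotProduct_mulVec_sub_dotProduct_mulVec x y
  have hlin : (M - G *ᵥ y) ⬝ᵥ (x - y) = M ⬝ᵥ x - M ⬝ᵥ y - (G *ᵥ y) ⬝ᵥ (x - y) := by
    rw [sub_dotProduct, dotProduct_sub]
  rw [hlin]
  simp only [lassoObjective, dotProduct] at hquad ⊢
  linarith

theorem lasso_basic_inequality {M : n → ℝ} {G : Matrix n n ℝ} (hG : G.PosSemidef) {r : ℝ}
    {ρhat ρ : n → ℝ} (hmin : lassoObjective M G r ρhat ≤ lassoObjective M G r ρ) :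
    r * ∑ j, |ρhat j| ≤ (M - G *ᵥ ρ) ⬝ᵥ (ρhat - ρ) + r * ∑ j, |ρ j| := by
  have hdiff := lassoObjective_sub_lassoObjective (isHermitian_iff_isSymm.mp hG.1) M r ρhat ρ
  have hquad : 0 ≤ (ρhat - ρ) ⬝ᵥ (G *ᵥ (ρhat - ρ)) := by
    simpa using hG.dotProduct_mulVec_nonneg (ρhat - ρ)
  linarith

end Lasso

/-- ℓ¹ bound for the Lasso estimator (core of Lemma C3): if
`|M̂ − Ĝρ_L|_∞ ≤ r/4` and `ρ̂` minimizes `ρ ↦ −2M̂'ρ + ρ'Ĝρ + 2r|ρ|₁`, then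
`|ρ̂|₁ ≤ 3|ρ_L|₁`. -/
theorem lasso_l1_bound
    {p : ℕ} (Mhat : Fin p → ℝ) (Ghat : Matrix (Fin p) (Fin p) ℝ)
    (hG : Ghat.PosSemidef)
    (ρL : Fin p → ℝ) (r : ℝ) (hr : 0 < r)
    (hFOC : ∀ j, |Mhat j - (Ghat *ᵥ ρL) j| ≤ r / 4)
    (ρhat : Fin p → ℝ)
    (hmin : ∀ ρ : Fin p → ℝ,
      -2 * (∑ j, Mhat j * ρhat j) + ρhat ⬝ᵥ (Ghat *ᵥ ρhat) + 2 * r * (∑ j, |ρhat j|)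
        ≤ -2 * (∑ j, Mhat j * ρ j) + ρ ⬝ᵥ (Ghat *ᵥ ρ) + 2 * r * (∑ j, |ρ j|)) :
    ∑ j, |ρhat j| ≤ 3 * ∑ j, |ρL j| := by
  have hbasic := lasso_basic_inequality (M := Mhat) hG (hmin ρL)
  have hlin : (Mhat - Ghat *ᵥ ρL) ⬝ᵥ (ρhat - ρL) ≤ r / 4 * ∑ j, |(ρhat - ρL) j| :=
    dotProduct_le_mul_sum_abs hFOC
  have hsplit := sum_abs_sub_le_s15 ρhat ρL
  have hL : 0 ≤ ∑ j, |ρL j| := Finset.sum_nonneg fun j _ => abs_nonneg _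
  have hscaled : r * (3 * ∑ j, |ρhat j|) ≤ r * (5 * ∑ j, |ρL j|) := by
    simp only [Pi.sub_apply] at hlin
    nlinarith
  linarith [le_of_mul_le_mul_left hscaled hr]
end
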